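/- A coefficient collection β̂ = (β̂_{jk})_{j≠k} is a global minimizer of the SpaCE JAM objective F if and only if, for every ordered pair (j,k) with j ≠ k, writing r_j = x_j − Σ_{l≠j} Ψ_{jl} β̂_{jl} for the full residual: (a) if (β̂_{jk}, β̂_{kj}) ≠ (0,0), then (1/n) Ψ_{jk}ᵀ r_j = λ n β̂_{jk} / (‖Ψ_{jk} β̂_{jk}‖₂² + ‖Ψ_{kj} β̂_{kj}‖₂²)^{1/2}; and (b) if (β̂_{jk}, β̂_{kj}) = (0,0), then ‖(1/n) Ψ_{jk}ᵀ r_j‖₂² + ‖(1/n) Ψ_{kj}ᵀ r_k‖₂² ≤ n λ². -/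

import Mathlib

open Matrix
open scoped Classical

/-- Squared Euclidean norm ‖v‖₂² of a vector in ℝ^n. -/
noncomputable def sqNorm {n : ℕ} (v : Fin n → ℝ) : ℝ := ∑ i, v i ^ 2

/-- The SpaCE JAM objective
F(β) = (1/(2n)) Σ_j ‖x_j − Σ_{k≠j} Ψ_{jk}β_{jk}‖₂²
       + λ Σ_{k>j} (‖Ψ_{jk}β_{jk}‖₂² + ‖Ψ_{kj}β_{kj}‖₂²)^{1/2}. -/
noncomputable def spaceJamObj (n r d : ℕ) (lam : ℝ)
    (x : Fin d → Fin n → ℝ)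
    (Ψ : Fin d → Fin d → Matrix (Fin n) (Fin r) ℝ)
    (β : Fin d → Fin d → Fin r → ℝ) : ℝ :=
  (1 / (2 * (n : ℝ))) * ∑ j, sqNorm (fun i =>
      x j i - ∑ k ∈ Finset.univ.filter (fun k => k ≠ j), (Ψ j k).mulVec (β j k) i)
  + lam * ∑ p ∈ Finset.univ.filter (fun p : Fin d × Fin d => p.1 < p.2),
      Real.sqrt (sqNorm ((Ψ p.1 p.2).mulVec (β p.1 p.2))
        + sqNorm ((Ψ p.2 p.1).mulVec (β p.2 p.1)))

/-! The penalty is `λ√n` times a sum of Euclidean norms: orthonormality gives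
`‖Ψ_{jk} u‖² = n ‖u‖²`, so the `(j,k)` summand is `λ√n ‖(β_{jk}, β_{kj})‖`. Expanding the quadratic
loss exactly around `β̂` writes `F(β̂ + δ) - F(β̂)` as a sum over blocks `j < k` of
`μ ‖W + D‖ - μ ‖W‖ - ⟪G, D⟫` (with `μ = λ√n`, `W`, `D` the blocks of `β̂`, `δ`, and `G` the block of
`(1/n) Ψᵀ r`) plus a nonnegative quadratic. Hence `β̂` is a minimizer as soon as every `G` is a
subgradient of `μ ‖·‖` at `W`. Conversely, perturbing a single block makes the quadratic exactly
`‖D‖² / 2`, and a quadratic slack can be removed from a subgradient inequality of a convex function.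
The subgradients of `μ ‖·‖` at `W` are `μ W / ‖W‖` if `W ≠ 0` and the ball of radius `μ` if
`W = 0`: these are conditions (a) and (b). -/

open Finset Filter Topology
open scoped RealInnerProductSpace

section NormSubgradient

variable {E : Type*} [NormedAddCommGroup E] [InnerProductSpace ℝ E]

theorem ConvexOn.inner_sub_le_of_forall_inner_sub_le_add_sq {f : E → ℝ}
    (hf : ConvexOn ℝ Set.univ f) {g w₀ : E}
    (h : ∀ w, ⟪g, w - w₀⟫ ≤ f w - f w₀ + ‖w - w₀‖ ^ 2 / 2) (w : E) :
    ⟪g, w - w₀⟫ ≤ f w - f w₀ := by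
  have hlim : Tendsto (fun t : ℝ => f w - f w₀ + t * ‖w - w₀‖ ^ 2 / 2) (𝓝[>] 0)
      (𝓝 (f w - f w₀)) := by
    have : Continuous (fun t : ℝ => f w - f w₀ + t * ‖w - w₀‖ ^ 2 / 2) := by fun_prop
    simpa using (this.tendsto 0).mono_left nhdsWithin_le_nhds
  refine ge_of_tendsto hlim ?_
  filter_upwards [Ioo_mem_nhdsGT one_pos] with t ⟨ht₀, ht₁⟩
  have hconv : f (w₀ + t • (w - w₀)) ≤ (1 - t) * f w₀ + t * f w := by
    rw [show w₀ + t • (w - w₀) = (1 - t) • w₀ + t • w by module]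
    exact hf.2 (Set.mem_univ w₀) (Set.mem_univ w) (by linarith) ht₀.le (by ring)
  have hw := h (w₀ + t • (w - w₀))
  rw [add_sub_cancel_left, inner_smul_right, norm_smul, Real.norm_of_nonneg ht₀.le] at hw
  have : t * ⟪g, w - w₀⟫ ≤ t * (f w - f w₀ + t * ‖w - w₀‖ ^ 2 / 2) := by nlinarith
  exact le_of_mul_le_mul_left this ht₀

theorem forall_inner_sub_le_mul_norm_sub_iff {μ : ℝ} (hμ : 0 ≤ μ) {g w₀ : E} :
    (∀ w, ⟪g, w - w₀⟫ ≤ μ * ‖w‖ - μ * ‖w₀‖) ↔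
      (w₀ ≠ 0 → g = (μ / ‖w₀‖) • w₀) ∧ (w₀ = 0 → ‖g‖ ≤ μ) := by
  constructor
  · intro h
    have hg : ‖g‖ ≤ μ := by
      have h₁ := h (w₀ + g)
      rw [add_sub_cancel_left, real_inner_self_eq_norm_sq] at h₁
      nlinarith [norm_add_le w₀ g, norm_nonneg g]
    refine ⟨fun hw₀ => ?_, fun _ => hg⟩
    have hpos : 0 < ‖w₀‖ := norm_pos_iff.2 hw₀
    have h₀ := h 0
    have h₂ := h ((2 : ℝ) • w₀)
    rw [zero_sub, inner_neg_right, norm_zero] at h₀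
    rw [show (2 : ℝ) • w₀ - w₀ = w₀ by module, norm_smul, Real.norm_two] at h₂
    have hcs := real_inner_le_norm g w₀
    have heq : ⟪g, w₀⟫ = ‖g‖ * ‖w₀‖ := by nlinarith
    have hgμ : ‖g‖ = μ := by nlinarith
    have hparallel := inner_eq_norm_mul_iff_real.1 heq
    rw [hgμ] at hparallel
    rw [div_eq_inv_mul, mul_smul, ← hparallel, smul_smul, inv_mul_cancel₀ hpos.ne', one_smul]
  · rintro ⟨hne, hzero⟩ w
    by_cases hw₀ : w₀ = 0
    · subst hw₀
      simp only [sub_zero, norm_zero, mul_zero]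
      nlinarith [real_inner_le_norm g w, hzero rfl, norm_nonneg w]
    · have hpos : 0 < ‖w₀‖ := norm_pos_iff.2 hw₀
      rw [hne hw₀, real_inner_smul_left, inner_sub_right, real_inner_self_eq_norm_sq]
      have hcs := real_inner_le_norm w₀ w
      calc μ / ‖w₀‖ * (⟪w₀, w⟫ - ‖w₀‖ ^ 2)
          ≤ μ / ‖w₀‖ * (‖w₀‖ * ‖w‖ - ‖w₀‖ ^ 2) := by gcongr
        _ = μ * ‖w‖ - μ * ‖w₀‖ := by field_simp

end NormSubgradient

theorem forall_ne_iff_forall_lt {ι : Type*} [LinearOrder ι] {P : ι → ι → Prop} :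
    (∀ j k, j ≠ k → P j k) ↔ ∀ j k, j < k → P j k ∧ P k j := by
  refine ⟨fun h j k hjk => ⟨h j k hjk.ne, h k j hjk.ne'⟩, fun h j k hjk => ?_⟩
  rcases hjk.lt_or_gt with hjk | hkj
  exacts [(h j k hjk).1, (h k j hkj).2]

theorem Finset.sum_sum_ne_eq_sum_lt {ι M : Type*} [Fintype ι] [LinearOrder ι] [AddCommMonoid M]
    (f : ι → ι → M) :
    ∑ a, ∑ b ∈ univ.filter (fun b => b ≠ a), f a b
      = ∑ p ∈ univ.filter (fun p : ι × ι => p.1 < p.2), (f p.1 p.2 + f p.2 p.1) := by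
  have hsplit : ∀ a b, (if b ≠ a then f a b else 0)
      = (if a < b then f a b else 0) + (if b < a then f a b else 0) := by
    intro a b
    rcases lt_trichotomy a b with h | rfl | h
    · simp [h, h.ne', h.not_gt]
    · simp
    · simp [h, h.ne, h.not_gt]
  have hcomm : ∑ a, ∑ b, (if b < a then f a b else 0) = ∑ a, ∑ b, (if a < b then f b a else 0) :=
    sum_comm
  simp only [sum_filter, Fintype.sum_prod_type, hsplit, sum_add_distrib, hcomm]

theorem sqNorm_eq_dotProduct {n : ℕ} (v : Fin n → ℝ) : sqNorm v = v ⬝ᵥ v := by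
  simp only [sqNorm, dotProduct, sq]

theorem sqNorm_nonneg {n : ℕ} (v : Fin n → ℝ) : 0 ≤ sqNorm v :=
  Finset.sum_nonneg fun i _ => sq_nonneg (v i)

theorem sqNorm_mulVec_of_transpose_mul_self {m n : ℕ} {A : Matrix (Fin m) (Fin n) ℝ} {c : ℝ}
    (hA : Aᵀ * A = c • 1) (u : Fin n → ℝ) : sqNorm (A *ᵥ u) = c * sqNorm u := by
  rw [sqNorm_eq_dotProduct, sqNorm_eq_dotProduct, dotProduct_mulVec, vecMul_mulVec, hA,
    vecMul_smul, vecMul_one, smul_dotProduct, smul_eq_mul]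

section PairSpace

abbrev PairSpace (r : ℕ) := WithLp 2 (EuclideanSpace ℝ (Fin r) × EuclideanSpace ℝ (Fin r))

variable {r : ℕ}

def pairVec (u v : Fin r → ℝ) : PairSpace r := WithLp.toLp 2 (WithLp.toLp 2 u, WithLp.toLp 2 v)

theorem pairVec_smul (c : ℝ) (u v : Fin r → ℝ) : pairVec (c • u) (c • v) = c • pairVec u v := rfl

theorem pairVec_fst_snd (w : PairSpace r) : pairVec w.fst.ofLp w.snd.ofLp = w := rfl

theorem pairVec_inj {u v u' v' : Fin r → ℝ} : pairVec u v = pairVec u' v' ↔ u = u' ∧ v = v' := by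
  simp [pairVec, Prod.ext_iff]

theorem pairVec_eq_zero {u v : Fin r → ℝ} : pairVec u v = 0 ↔ u = 0 ∧ v = 0 :=
  pairVec_inj (u' := 0) (v' := 0)

theorem norm_pairVec_sq (u v : Fin r → ℝ) : ‖pairVec u v‖ ^ 2 = sqNorm u + sqNorm v := by
  simp [WithLp.prod_norm_sq_eq_of_L2, EuclideanSpace.real_norm_sq_eq, pairVec, sqNorm]

theorem norm_pairVec (u v : Fin r → ℝ) : ‖pairVec u v‖ = √(sqNorm u + sqNorm v) := by
  rw [← norm_pairVec_sq, Real.sqrt_sq (norm_nonneg _)]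

theorem inner_pairVec (u v u' v' : Fin r → ℝ) :
    ⟪pairVec u v, pairVec u' v'⟫ = u ⬝ᵥ u' + v ⬝ᵥ v' := by
  simp [WithLp.prod_inner_apply, pairVec, EuclideanSpace.inner_toLp_toLp, dotProduct_comm]

end PairSpace

noncomputable section

namespace SpaceJam

variable {n r d : ℕ} (x : Fin d → Fin n → ℝ) (Ψ : Fin d → Fin d → Matrix (Fin n) (Fin r) ℝ)

def residual (β : Fin d → Fin d → Fin r → ℝ) (j : Fin d) : Fin n → ℝ :=
  fun i => x j i - ∑ l ∈ Finset.univ.filter (fun l => l ≠ j), (Ψ j l).mulVec (β j l) i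

def negGrad (β : Fin d → Fin d → Fin r → ℝ) (j k : Fin d) : Fin r → ℝ :=
  (1 / (n : ℝ)) • (Ψ j k)ᵀ.mulVec (residual x Ψ β j)

def blockPair (β : Fin d → Fin d → Fin r → ℝ) (j k : Fin d) : PairSpace r :=
  pairVec (β j k) (β k j)

def pairPerturb (j k : Fin d) (u v : Fin r → ℝ) : Fin d → Fin d → Fin r → ℝ :=
  fun a b => if a = j ∧ b = k then u else if a = k ∧ b = j then v else 0

def IsKKTAt (lam : ℝ) (βh : Fin d → Fin d → Fin r → ℝ) (j k : Fin d) : Prop :=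
  (¬(βh j k = 0 ∧ βh k j = 0) →
      negGrad x Ψ βh j k
        = (lam * n / √(sqNorm (Ψ j k *ᵥ βh j k) + sqNorm (Ψ k j *ᵥ βh k j))) • βh j k)
    ∧ ((βh j k = 0 ∧ βh k j = 0) →
      sqNorm (negGrad x Ψ βh j k) + sqNorm (negGrad x Ψ βh k j) ≤ n * lam ^ 2)

theorem residual_add (β δ : Fin d → Fin d → Fin r → ℝ) (j : Fin d) :
    residual x Ψ (β + δ) j
      = residual x Ψ β j - ∑ k ∈ univ.filter (fun k => k ≠ j), Ψ j k *ᵥ δ j k := by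
  ext i
  simp only [residual, Pi.add_apply, mulVec_add, sum_add_distrib, Pi.sub_apply, Finset.sum_apply]
  ring

theorem sqNorm_residual_add (β δ : Fin d → Fin d → Fin r → ℝ) (j : Fin d) :
    sqNorm (residual x Ψ (β + δ) j)
      = sqNorm (residual x Ψ β j)
        - 2 * ∑ k ∈ univ.filter (fun k => k ≠ j), (Ψ j k)ᵀ *ᵥ residual x Ψ β j ⬝ᵥ δ j k
        + sqNorm (∑ k ∈ univ.filter (fun k => k ≠ j), Ψ j k *ᵥ δ j k) := by
  rw [residual_add, sqNorm_eq_dotProduct, sqNorm_eq_dotProduct, sqNorm_eq_dotProduct,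
    sub_dotProduct, dotProduct_sub, dotProduct_sub,
    dotProduct_comm (∑ k ∈ _, _) (residual x Ψ β j), dotProduct_sum]
  simp only [dotProduct_mulVec, ← mulVec_transpose]
  ring

theorem sum_sqNorm_residual_add (β δ : Fin d → Fin d → Fin r → ℝ) :
    1 / (2 * (n : ℝ)) * ∑ j, sqNorm (residual x Ψ (β + δ) j)
      = 1 / (2 * (n : ℝ)) * ∑ j, sqNorm (residual x Ψ β j)
        - ∑ j, ∑ k ∈ univ.filter (fun k => k ≠ j), negGrad x Ψ β j k ⬝ᵥ δ j k
        + 1 / (2 * (n : ℝ)) * ∑ j, sqNorm (∑ k ∈ univ.filter (fun k => k ≠ j), Ψ j k *ᵥ δ j k) := by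
  simp only [sqNorm_residual_add, negGrad, smul_dotProduct, smul_eq_mul, ← mul_sum,
    sum_add_distrib, sum_sub_distrib]
  ring

theorem blockPair_add (β δ : Fin d → Fin d → Fin r → ℝ) (j k : Fin d) :
    blockPair (β + δ) j k = blockPair β j k + blockPair δ j k := rfl

theorem inner_blockPair (β δ : Fin d → Fin d → Fin r → ℝ) (j k : Fin d) :
    ⟪blockPair β j k, blockPair δ j k⟫ = β j k ⬝ᵥ δ j k + β k j ⬝ᵥ δ k j :=
  inner_pairVec _ _ _ _

variable {x Ψ}

theorem blockPair_eq_zero {β : Fin d → Fin d → Fin r → ℝ} {j k : Fin d} :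
    blockPair β j k = 0 ↔ β j k = 0 ∧ β k j = 0 :=
  pairVec_eq_zero

theorem blockPair_swap_eq_zero (β : Fin d → Fin d → Fin r → ℝ) (j k : Fin d) :
    blockPair β k j = 0 ↔ blockPair β j k = 0 := by
  rw [blockPair_eq_zero, blockPair_eq_zero, and_comm]

theorem norm_blockPair_swap (β : Fin d → Fin d → Fin r → ℝ) (j k : Fin d) :
    ‖blockPair β k j‖ = ‖blockPair β j k‖ := by
  rw [blockPair, blockPair, norm_pairVec, norm_pairVec, add_comm]

theorem blockPair_eq_smul_iff {g β : Fin d → Fin d → Fin r → ℝ} {j k : Fin d} {c : ℝ} :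
    blockPair g j k = c • blockPair β j k ↔ g j k = c • β j k ∧ g k j = c • β k j := by
  rw [blockPair, blockPair, ← pairVec_smul, pairVec_inj]

theorem sqrt_sqNorm_mulVec_add_sqNorm_mulVec
    (hΨ : ∀ j k, j ≠ k → ∀ u, sqNorm (Ψ j k *ᵥ u) = n * sqNorm u)
    (β : Fin d → Fin d → Fin r → ℝ) {j k : Fin d} (hjk : j ≠ k) :
    √(sqNorm (Ψ j k *ᵥ β j k) + sqNorm (Ψ k j *ᵥ β k j)) = √n * ‖blockPair β j k‖ := by
  rw [hΨ j k hjk, hΨ k j hjk.symm, ← mul_add, Real.sqrt_mul n.cast_nonneg, blockPair,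
    norm_pairVec]

theorem spaceJamObj_eq (hΨ : ∀ j k, j ≠ k → ∀ u, sqNorm (Ψ j k *ᵥ u) = n * sqNorm u)
    (lam : ℝ) (β : Fin d → Fin d → Fin r → ℝ) :
    spaceJamObj n r d lam x Ψ β
      = 1 / (2 * (n : ℝ)) * ∑ j, sqNorm (residual x Ψ β j)
        + ∑ p ∈ univ.filter (fun p : Fin d × Fin d => p.1 < p.2),
            lam * √n * ‖blockPair β p.1 p.2‖ := by
  rw [spaceJamObj, Finset.mul_sum _ _ lam]
  refine congrArg _ (Finset.sum_congr rfl fun p hp => ?_)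
  rw [sqrt_sqNorm_mulVec_add_sqNorm_mulVec hΨ β (mem_filter.1 hp).2.ne, mul_assoc]

theorem spaceJamObj_add_sub (hΨ : ∀ j k, j ≠ k → ∀ u, sqNorm (Ψ j k *ᵥ u) = n * sqNorm u)
    (lam : ℝ) (β δ : Fin d → Fin d → Fin r → ℝ) :
    spaceJamObj n r d lam x Ψ (β + δ) - spaceJamObj n r d lam x Ψ β
      = ∑ p ∈ univ.filter (fun p : Fin d × Fin d => p.1 < p.2),
          (lam * √n * ‖blockPair β p.1 p.2 + blockPair δ p.1 p.2‖
            - lam * √n * ‖blockPair β p.1 p.2‖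
            - ⟪blockPair (negGrad x Ψ β) p.1 p.2, blockPair δ p.1 p.2⟫)
        + 1 / (2 * (n : ℝ)) * ∑ j, sqNorm (∑ k ∈ univ.filter (fun k => k ≠ j), Ψ j k *ᵥ δ j k) := by
  rw [spaceJamObj_eq hΨ, spaceJamObj_eq hΨ, sum_sqNorm_residual_add, sum_sum_ne_eq_sum_lt]
  simp only [blockPair_add, inner_blockPair, sum_sub_distrib]
  ring

theorem blockPair_pairPerturb {j k : Fin d} (hjk : j ≠ k) (u v : Fin r → ℝ) :
    blockPair (pairPerturb j k u v) j k = pairVec u v := by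
  simp [blockPair, pairPerturb, hjk.symm]

theorem blockPair_pairPerturb_of_ne {j k : Fin d} (hjk : j < k) (u v : Fin r → ℝ)
    {p : Fin d × Fin d} (hp : p.1 < p.2) (hpjk : p ≠ (j, k)) :
    blockPair (pairPerturb j k u v) p.1 p.2 = 0 := by
  obtain ⟨a, b⟩ := p
  have hjk' : ¬(a = j ∧ b = k) := fun h => hpjk (by rw [h.1, h.2])
  have hkj : ¬(a = k ∧ b = j) := fun h => (h.1 ▸ h.2 ▸ hjk).not_gt hp
  simp only [blockPair, pairPerturb, and_comm (a := b = _), if_neg hjk', if_neg hkj,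
    pairVec_eq_zero, and_self]

theorem sum_mulVec_pairPerturb {j k : Fin d} (hjk : j ≠ k) (u v : Fin r → ℝ) (a : Fin d) :
    ∑ b ∈ univ.filter (fun b => b ≠ a), Ψ a b *ᵥ pairPerturb j k u v a b
      = if a = j then Ψ j k *ᵥ u else if a = k then Ψ k j *ᵥ v else 0 := by
  split_ifs with haj hak
  · subst haj
    rw [sum_eq_single_of_mem k (by simpa using hjk.symm) fun b _ hb => by
      simp [pairPerturb, hb, hjk]]
    simp [pairPerturb]
  · subst hak
    rw [sum_eq_single_of_mem j (by simpa using hjk) fun b _ hb => by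
      simp [pairPerturb, hb, hjk.symm]]
    simp [pairPerturb, hjk.symm]
  · exact sum_eq_zero fun b _ => by simp [pairPerturb, haj, hak]

theorem sum_sqNorm_sum_mulVec_pairPerturb {j k : Fin d} (hjk : j ≠ k) (u v : Fin r → ℝ) :
    ∑ a, sqNorm (∑ b ∈ univ.filter (fun b => b ≠ a), Ψ a b *ᵥ pairPerturb j k u v a b)
      = sqNorm (Ψ j k *ᵥ u) + sqNorm (Ψ k j *ᵥ v) := by
  simp only [sum_mulVec_pairPerturb hjk]
  rw [Fintype.sum_eq_add j k hjk fun a ha => by simp [ha.1, ha.2, sqNorm]]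
  simp [hjk.symm]

theorem spaceJamObj_add_pairPerturb_sub (hn : (n : ℝ) ≠ 0)
    (hΨ : ∀ j k, j ≠ k → ∀ u, sqNorm (Ψ j k *ᵥ u) = n * sqNorm u)
    (lam : ℝ) (β : Fin d → Fin d → Fin r → ℝ) {j k : Fin d} (hjk : j < k) (u v : Fin r → ℝ) :
    spaceJamObj n r d lam x Ψ (β + pairPerturb j k u v) - spaceJamObj n r d lam x Ψ β
      = lam * √n * ‖blockPair β j k + pairVec u v‖ - lam * √n * ‖blockPair β j k‖
        - ⟪blockPair (negGrad x Ψ β) j k, pairVec u v⟫ + ‖pairVec u v‖ ^ 2 / 2 := by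
  rw [spaceJamObj_add_sub hΨ, sum_eq_single_of_mem (j, k) (by simpa using hjk)
      fun p hp hpjk => by simp [blockPair_pairPerturb_of_ne hjk u v (mem_filter.1 hp).2 hpjk],
    sum_sqNorm_sum_mulVec_pairPerturb hjk.ne, hΨ j k hjk.ne, hΨ k j hjk.ne', norm_pairVec_sq,
    blockPair_pairPerturb hjk.ne]
  field_simp

theorem forall_spaceJamObj_le_iff (hn : (n : ℝ) ≠ 0)
    (hΨ : ∀ j k, j ≠ k → ∀ u, sqNorm (Ψ j k *ᵥ u) = n * sqNorm u)
    {lam : ℝ} (hlam : 0 ≤ lam) (βh : Fin d → Fin d → Fin r → ℝ) :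
    (∀ β, spaceJamObj n r d lam x Ψ βh ≤ spaceJamObj n r d lam x Ψ β) ↔
      ∀ j k, j < k → ∀ w, ⟪blockPair (negGrad x Ψ βh) j k, w - blockPair βh j k⟫
        ≤ lam * √n * ‖w‖ - lam * √n * ‖blockPair βh j k‖ := by
  constructor
  · intro hmin j k hjk
    refine ((convexOn_norm convex_univ).smul (by positivity : 0 ≤ lam * √n)
      ).inner_sub_le_of_forall_inner_sub_le_add_sq fun w => ?_
    have h := sub_nonneg.2 <| hmin <|
      βh + pairPerturb j k (w - blockPair βh j k).fst.ofLp (w - blockPair βh j k).snd.ofLp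
    rw [spaceJamObj_add_pairPerturb_sub hn hΨ lam βh hjk, pairVec_fst_snd,
      add_sub_cancel] at h
    linarith
  · intro hsub β
    have h := spaceJamObj_add_sub (x := x) hΨ lam βh (β - βh)
    rw [add_sub_cancel] at h
    rw [← sub_nonneg, h]
    refine add_nonneg (sum_nonneg fun p hp => ?_)
      (mul_nonneg (by positivity) (sum_nonneg fun j _ => sqNorm_nonneg _))
    have := hsub p.1 p.2 (mem_filter.1 hp).2 (blockPair βh p.1 p.2 + blockPair (β - βh) p.1 p.2)
    rw [add_sub_cancel_left] at this
    linarith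

theorem isKKTAt_iff
    (hΨ : ∀ j k, j ≠ k → ∀ u, sqNorm (Ψ j k *ᵥ u) = n * sqNorm u)
    {lam : ℝ} (hlam : 0 ≤ lam) (βh : Fin d → Fin d → Fin r → ℝ) {j k : Fin d} (hjk : j ≠ k) :
    IsKKTAt x Ψ lam βh j k ↔
      (blockPair βh j k ≠ 0 →
          negGrad x Ψ βh j k = (lam * √n / ‖blockPair βh j k‖) • βh j k)
        ∧ (blockPair βh j k = 0 → ‖blockPair (negGrad x Ψ βh) j k‖ ≤ lam * √n) := by
  have hcoef : lam * n / √(sqNorm (Ψ j k *ᵥ βh j k) + sqNorm (Ψ k j *ᵥ βh k j))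
      = lam * √n / ‖blockPair βh j k‖ := by
    rw [sqrt_sqNorm_mulVec_add_sqNorm_mulVec hΨ βh hjk, ← div_div, mul_div_assoc, Real.div_sqrt]
  have hbound : sqNorm (negGrad x Ψ βh j k) + sqNorm (negGrad x Ψ βh k j) ≤ n * lam ^ 2
      ↔ ‖blockPair (negGrad x Ψ βh) j k‖ ≤ lam * √n := by
    rw [← norm_pairVec_sq, ← blockPair, ← sq_le_sq₀ (norm_nonneg _) (by positivity), mul_pow,
      Real.sq_sqrt n.cast_nonneg, mul_comm]
  rw [IsKKTAt, hcoef, hbound, Ne, blockPair_eq_zero]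

theorem isKKTAt_and_isKKTAt_swap_iff
    (hΨ : ∀ j k, j ≠ k → ∀ u, sqNorm (Ψ j k *ᵥ u) = n * sqNorm u)
    {lam : ℝ} (hlam : 0 ≤ lam) (βh : Fin d → Fin d → Fin r → ℝ) {j k : Fin d} (hjk : j ≠ k) :
    IsKKTAt x Ψ lam βh j k ∧ IsKKTAt x Ψ lam βh k j ↔
      (blockPair βh j k ≠ 0 →
          blockPair (negGrad x Ψ βh) j k = (lam * √n / ‖blockPair βh j k‖) • blockPair βh j k)
        ∧ (blockPair βh j k = 0 → ‖blockPair (negGrad x Ψ βh) j k‖ ≤ lam * √n) := by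
  simp only [isKKTAt_iff hΨ hlam βh hjk, isKKTAt_iff hΨ hlam βh hjk.symm, ne_eq,
    blockPair_swap_eq_zero βh j k, norm_blockPair_swap _ j k, blockPair_eq_smul_iff]
  tauto

end SpaceJam

end

/-- **KKT characterization of the SpaCE JAM minimizers.**
Under the orthonormality condition (1/n)Ψ_{jk}ᵀΨ_{jk} = I_r, a coefficient
collection β̂ is a global minimizer of F iff for every ordered pair (j,k), j ≠ k,
with r_j = x_j − Σ_{l≠j}Ψ_{jl}β̂_{jl}:
(a) if (β̂_{jk},β̂_{kj}) ≠ (0,0) then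
    (1/n)Ψ_{jk}ᵀr_j = λn β̂_{jk}/(‖Ψ_{jk}β̂_{jk}‖₂² + ‖Ψ_{kj}β̂_{kj}‖₂²)^{1/2};
(b) if (β̂_{jk},β̂_{kj}) = (0,0) then
    ‖(1/n)Ψ_{jk}ᵀr_j‖₂² + ‖(1/n)Ψ_{kj}ᵀr_k‖₂² ≤ nλ². -/
theorem spaceJam_global_min_iff_kkt
    (n r d : ℕ) (hn : 0 < n) (lam : ℝ) (hlam : 0 < lam)
    (x : Fin d → Fin n → ℝ)
    (Ψ : Fin d → Fin d → Matrix (Fin n) (Fin r) ℝ)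
    (horth : ∀ j k : Fin d, j ≠ k → (1 / (n : ℝ)) • ((Ψ j k)ᵀ * Ψ j k) = 1)
    (βh : Fin d → Fin d → Fin r → ℝ) :
    (∀ β, spaceJamObj n r d lam x Ψ βh ≤ spaceJamObj n r d lam x Ψ β)
    ↔ ∀ j k : Fin d, j ≠ k →
        ((¬(βh j k = 0 ∧ βh k j = 0)) →
          (1 / (n : ℝ)) • (Ψ j k)ᵀ.mulVec (fun i =>
              x j i - ∑ l ∈ Finset.univ.filter (fun l => l ≠ j),
                (Ψ j l).mulVec (βh j l) i)
            = (lam * n / Real.sqrt (sqNorm ((Ψ j k).mulVec (βh j k))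
                + sqNorm ((Ψ k j).mulVec (βh k j)))) • βh j k)
        ∧ ((βh j k = 0 ∧ βh k j = 0) →
          sqNorm ((1 / (n : ℝ)) • (Ψ j k)ᵀ.mulVec (fun i =>
              x j i - ∑ l ∈ Finset.univ.filter (fun l => l ≠ j),
                (Ψ j l).mulVec (βh j l) i))
          + sqNorm ((1 / (n : ℝ)) • (Ψ k j)ᵀ.mulVec (fun i =>
              x k i - ∑ l ∈ Finset.univ.filter (fun l => l ≠ k),
                (Ψ k l).mulVec (βh k l) i))
            ≤ n * lam ^ 2) := by
  have hn' : (n : ℝ) ≠ 0 := by positivity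
  have hΨ : ∀ j k, j ≠ k → ∀ u, sqNorm (Ψ j k *ᵥ u) = n * sqNorm u := fun j k hjk =>
    sqNorm_mulVec_of_transpose_mul_self <| by
      rw [← inv_smul_eq_iff₀ hn', ← one_div, horth j k hjk]
  change _ ↔ ∀ j k, j ≠ k → SpaceJam.IsKKTAt x Ψ lam βh j k
  rw [SpaceJam.forall_spaceJamObj_le_iff hn' hΨ hlam.le, forall_ne_iff_forall_lt]
  refine forall₂_congr fun j k => imp_congr_right fun hjk => ?_
  rw [SpaceJam.isKKTAt_and_isKKTAt_swap_iff hΨ hlam.le βh hjk.ne,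
    forall_inner_sub_le_mul_norm_sub_iff (by positivity)]
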